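/- Let (f, r) : ℝ → ℝ² be a solution of the reduced system f'' = -(M+mn) f / h(f,r)³, r'' = r₀²a²/r³ - mλ_n/r² - M r/h(f,r)³ with r > 0 everywhere, where h(f,r) = √(r² + ((M+nm)/(mn))² f²), with initial data f(0) = 0, r'(0) = 0. If there exists T > 0 with f(T) = 0 and r'(T) = 0, then f and r are periodic with period 2T; moreover f is odd and r is even. -/

import Mathlib

/-!
The reduced system is a second-order autonomous equation `x'' = F x` for `x = (f, r)`, whose force
`F` is `C¹` on the half-plane `r > 0` and commutes with `σ (f, r) = (-f, r)`. So the system is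
reversible: with `x` also `t ↦ σ (x (2 t₀ - t))` is a solution, and if `f t₀ = 0 = r' t₀` both
solutions have the same position and velocity at `t₀`, hence coincide by Cauchy–Lipschitz
uniqueness. At `t₀ = 0` this gives the parities of `f` and `r`; composing the reflections at `0`
and at `T` gives the translation by `2 T`.
-/

open Real

noncomputable def lambdaN (n : ℕ) : ℝ :=
  (1 / 4) * ∑ k ∈ Finset.Icc 1 (n - 1), 1 / Real.sin (k * Real.pi / n)

open Set

theorem Function.periodic_of_reflect {β : Type*} {γ : ℝ → β} {ρ : β → β} {a b : ℝ}
    (ha : ∀ t, ρ (γ (2 * a - t)) = γ t) (hb : ∀ t, ρ (γ (2 * b - t)) = γ t) :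
    Function.Periodic γ (2 * (b - a)) := by
  intro t
  rw [← hb]
  convert ha t using 3
  ring

section ReversibleODE

variable {E : Type*} [NormedAddCommGroup E] [NormedSpace ℝ E]

theorem ContDiffOn.locallyLipschitzOn_of_isOpen {F : Type*} [NormedAddCommGroup F]
    [NormedSpace ℝ F] {f : E → F} {U : Set E} (hf : ContDiffOn ℝ 1 f U) (hU : IsOpen U) :
    LocallyLipschitzOn U f := by
  intro x hx
  obtain ⟨K, t, ht, hK⟩ := (hf.contDiffAt (hU.mem_nhds hx)).exists_lipschitzOnWith
  exact ⟨K, t, nhdsWithin_le_nhds ht, hK⟩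

theorem IsIntegralCurve.eq_of_contDiffOn {v : E → E} {U : Set E} {γ γ' : ℝ → E} {t₀ : ℝ}
    (hv : ContDiffOn ℝ 1 v U) (hU : IsOpen U)
    (hγ : IsIntegralCurve γ fun _ ↦ v) (hγU : ∀ t, γ t ∈ U)
    (hγ' : IsIntegralCurve γ' fun _ ↦ v) (hγ'U : ∀ t, γ' t ∈ U)
    (h : γ t₀ = γ' t₀) : γ = γ' := by
  ext1 t
  obtain ⟨a, b, ht, ht₀⟩ : ∃ a b, t ∈ Ioo a b ∧ t₀ ∈ Ioo a b := by
    refine ⟨min t t₀ - 1, max t t₀ + 1, ?_, ?_⟩ <;> constructor <;> grind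
  -- `v` is Lipschitz on the compact part of `U` swept out by both curves over `[a, b]`
  set S := γ '' Icc a b ∪ γ' '' Icc a b
  have hS : IsCompact S :=
    (isCompact_Icc.image hγ.continuous).union (isCompact_Icc.image hγ'.continuous)
  have hSU : S ⊆ U := union_subset (image_subset_iff.2 fun s _ ↦ hγU s)
    (image_subset_iff.2 fun s _ ↦ hγ'U s)
  obtain ⟨K, hK⟩ :=
    ((hv.locallyLipschitzOn_of_isOpen hU).mono hSU).exists_lipschitzOnWith_of_compact hS
  exact ODE_solution_unique_of_mem_Ioo (s := fun _ ↦ S) (fun _ _ ↦ hK) ht₀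
    (fun s hs ↦ ⟨hγ s, Or.inl ⟨s, Ioo_subset_Icc_self hs, rfl⟩⟩)
    (fun s hs ↦ ⟨hγ' s, Or.inr ⟨s, Ioo_subset_Icc_self hs, rfl⟩⟩) h ht

theorem IsIntegralCurve.comp_const_sub_of_reversible {v : E → E} {γ : ℝ → E}
    (ρ : E →L[ℝ] E) (hρ : ∀ p, v (ρ p) = -ρ (v p))
    (hγ : IsIntegralCurve γ fun _ ↦ v) (c : ℝ) :
    IsIntegralCurve (fun t ↦ ρ (γ (c - t))) fun _ ↦ v := by
  intro t
  have := ρ.hasFDerivAt.comp_hasDerivAt t ((hγ (c - t)).comp_const_sub c t)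
  simpa [hρ, Function.comp_def] using this

theorem IsIntegralCurve.reflect_eq_of_contDiffOn {v : E → E} {U : Set E} {γ : ℝ → E} {t₀ : ℝ}
    (hv : ContDiffOn ℝ 1 v U) (hU : IsOpen U)
    (ρ : E →L[ℝ] E) (hρ : ∀ p, v (ρ p) = -ρ (v p)) (hρU : MapsTo ρ U U)
    (hγ : IsIntegralCurve γ fun _ ↦ v) (hγU : ∀ t, γ t ∈ U) (hfix : ρ (γ t₀) = γ t₀) (t : ℝ) :
    ρ (γ (2 * t₀ - t)) = γ t := by
  have := (hγ.comp_const_sub_of_reversible ρ hρ (2 * t₀)).eq_of_contDiffOn hv hU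
    (fun t ↦ hρU (hγU _)) hγ hγU (t₀ := t₀) (by rw [two_mul, add_sub_cancel_right, hfix])
  exact congrFun this t

def secondOrderField (F : E → E) (p : E × E) : E × E := (p.2, F p.1)

def phaseReversal (σ : E →L[ℝ] E) : E × E →L[ℝ] E × E := σ.prodMap (-σ)

theorem secondOrderField_phaseReversal {F : E → E} {σ : E →L[ℝ] E}
    (hF : ∀ x, F (σ x) = σ (F x)) (p : E × E) :
    secondOrderField F (phaseReversal σ p) = -phaseReversal σ (secondOrderField F p) := by
  simp [secondOrderField, phaseReversal, hF]

theorem ContDiffOn.secondOrderField {F : E → E} {U : Set E} (hF : ContDiffOn ℝ 1 F U) :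
    ContDiffOn ℝ 1 (secondOrderField F) (U ×ˢ univ) :=
  contDiffOn_snd.prodMk (hF.comp contDiffOn_fst fun _ hp ↦ hp.1)

end ReversibleODE

theorem isIntegralCurve_secondOrderField_prod {F : ℝ × ℝ → ℝ × ℝ} {f r : ℝ → ℝ}
    (hf : Differentiable ℝ f) (hf' : Differentiable ℝ (deriv f))
    (hr : Differentiable ℝ r) (hr' : Differentiable ℝ (deriv r))
    (hfF : ∀ t, deriv (deriv f) t = (F (f t, r t)).1)
    (hrF : ∀ t, deriv (deriv r) t = (F (f t, r t)).2) :
    IsIntegralCurve (fun t ↦ ((f t, r t), (deriv f t, deriv r t)))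
      fun _ ↦ secondOrderField F := by
  intro t
  have hF : F (f t, r t) = (deriv (deriv f) t, deriv (deriv r) t) := by rw [hfF, hrF]
  simp only [secondOrderField]
  rw [hF]
  exact ((hf t).hasDerivAt.prodMk (hr t).hasDerivAt).prodMk
    ((hf' t).hasDerivAt.prodMk (hr' t).hasDerivAt)

noncomputable def reducedForce (A B C D c : ℝ) (p : ℝ × ℝ) : ℝ × ℝ :=
  (-(A * p.1) / √(p.2 ^ 2 + c ^ 2 * p.1 ^ 2) ^ 3,
    B / p.2 ^ 3 - C / p.2 ^ 2 - D * p.2 / √(p.2 ^ 2 + c ^ 2 * p.1 ^ 2) ^ 3)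

def negFst : ℝ × ℝ →L[ℝ] ℝ × ℝ := (-1 : ℝ →L[ℝ] ℝ).prodMap 1

theorem reducedForce_negFst (A B C D c : ℝ) (p : ℝ × ℝ) :
    reducedForce A B C D c (negFst p) = negFst (reducedForce A B C D c p) := by
  simp [reducedForce, negFst, neg_div]

theorem contDiffOn_reducedForce (A B C D c : ℝ) :
    ContDiffOn ℝ 1 (reducedForce A B C D c) {p | 0 < p.2} := by
  unfold reducedForce
  fun_prop (disch := intro p (hp : 0 < p.2); positivity)

theorem odd_symmetry_periodic_general (M m r₀ a : ℝ) (n : ℕ) (f r : ℝ → ℝ)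
    (hf : ContDiff ℝ 2 f) (hr : ContDiff ℝ 2 r) (hrpos : ∀ t, 0 < r t)
    (hfode : ∀ t, deriv (deriv f) t =
      -((M + m * n) * f t) /
        (Real.sqrt ((r t) ^ 2 + ((M + n * m) / (m * n)) ^ 2 * (f t) ^ 2)) ^ 3)
    (hrode : ∀ t, deriv (deriv r) t =
      r₀ ^ 2 * a ^ 2 / (r t) ^ 3 - m * lambdaN n / (r t) ^ 2 -
        M * r t /
          (Real.sqrt ((r t) ^ 2 + ((M + n * m) / (m * n)) ^ 2 * (f t) ^ 2)) ^ 3)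
    (hf0 : f 0 = 0) (hr'0 : deriv r 0 = 0)
    (T : ℝ) (hfT : f T = 0) (hr'T : deriv r T = 0) :
    Function.Periodic f (2 * T) ∧ Function.Periodic r (2 * T) ∧
      (∀ t, f (-t) = -f t) ∧ (∀ t, r (-t) = r t) := by
  set F := reducedForce (M + m * n) (r₀ ^ 2 * a ^ 2) (m * lambdaN n) M ((M + n * m) / (m * n))
  set γ := fun t ↦ ((f t, r t), (deriv f t, deriv r t))
  have hγ : IsIntegralCurve γ fun _ ↦ secondOrderField F :=
    isIntegralCurve_secondOrderField_prod (hf.differentiable two_ne_zero)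
      hf.differentiable_deriv_two (hr.differentiable two_ne_zero) hr.differentiable_deriv_two
      hfode hrode
  have hreflect (t₀ : ℝ) (hft₀ : f t₀ = 0) (hr't₀ : deriv r t₀ = 0) (t : ℝ) :
      phaseReversal negFst (γ (2 * t₀ - t)) = γ t :=
    hγ.reflect_eq_of_contDiffOn (contDiffOn_reducedForce _ _ _ _ _).secondOrderField
      ((isOpen_lt continuous_const continuous_snd).prod isOpen_univ) _
      (secondOrderField_phaseReversal (reducedForce_negFst _ _ _ _ _))
      (fun p hp ↦ ⟨by simpa [phaseReversal, negFst] using hp.1, trivial⟩)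
      (fun t ↦ ⟨hrpos t, trivial⟩) (by simp [γ, phaseReversal, negFst, hft₀, hr't₀]) t
  have hsymm := hreflect 0 hf0 hr'0
  have hper := Function.periodic_of_reflect hsymm (hreflect T hfT hr'T)
  simp only [mul_zero, zero_sub, sub_zero] at hsymm hper
  refine ⟨fun t ↦ congrArg (·.1.1) (hper t), fun t ↦ congrArg (·.1.2) (hper t),
    fun t ↦ ?_, fun t ↦ ?_⟩
  · simpa [γ, phaseReversal, negFst, neg_eq_iff_eq_neg] using congrArg (·.1.1) (hsymm t)
  · simpa [γ, phaseReversal, negFst] using congrArg (·.1.2) (hsymm t)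

theorem odd_symmetry_periodic (M m r₀ a : ℝ) (n : ℕ) (hM : 0 ≤ M) (hm : 0 < m)
    (hr₀ : 0 < r₀) (hn : 2 ≤ n) (f r : ℝ → ℝ)
    (hf : ContDiff ℝ 2 f) (hr : ContDiff ℝ 2 r) (hrpos : ∀ t, 0 < r t)
    (hfode : ∀ t, deriv (deriv f) t =
      -((M + m * n) * f t) /
        (Real.sqrt ((r t) ^ 2 + ((M + n * m) / (m * n)) ^ 2 * (f t) ^ 2)) ^ 3)
    (hrode : ∀ t, deriv (deriv r) t =
      r₀ ^ 2 * a ^ 2 / (r t) ^ 3 - m * lambdaN n / (r t) ^ 2 -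
        M * r t /
          (Real.sqrt ((r t) ^ 2 + ((M + n * m) / (m * n)) ^ 2 * (f t) ^ 2)) ^ 3)
    (hf0 : f 0 = 0) (hr'0 : deriv r 0 = 0)
    (T : ℝ) (hT : 0 < T) (hfT : f T = 0) (hr'T : deriv r T = 0) :
    Function.Periodic f (2 * T) ∧ Function.Periodic r (2 * T) ∧
      (∀ t, f (-t) = -f t) ∧ (∀ t, r (-t) = r t) :=
  odd_symmetry_periodic_general M m r₀ a n f r hf hr hrpos hfode hrode hf0 hr'0 T hfT hr'T
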